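/- Let (X, ρ, μ) be a metric measure space with μ(X \ supp(μ)) = 0 which admits an infinite family of pairwise disjoint open balls, each of finite positive measure. Fix p ∈ (1, ∞) and q, r ∈ [1, ∞] with r < q. Then the centered Hardy–Littlewood maximal operator M is not bounded from L^{p,q}(X) to L^{p,r}(X); i.e., there is no finite constant C with ‖Mf‖_{p,r} ≤ C ‖f‖_{p,q} for all f ∈ L^{p,q}(X). -/

import Mathlib

open MeasureTheory Set Filter
open scoped ENNReal

/-- The Lorentz quasinorm `‖g‖_{p,q}` of an `ℝ≥0∞`-valued function, defined through the
distribution function `t ↦ μ({g > t})`, with the usual modification for `q = ∞`. -/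
noncomputable def lNormE {X : Type*} [MeasurableSpace X] (μ : Measure X)
    (p : ℝ) (q : ℝ≥0∞) (g : X → ℝ≥0∞) : ℝ≥0∞ :=
  if q = ⊤ then
    ⨆ (t : ℝ) (_ : 0 < t), ENNReal.ofReal t * μ {x | ENNReal.ofReal t < g x} ^ (1 / p)
  else
    ENNReal.ofReal p ^ (1 / q.toReal) *
      (∫⁻ t in Set.Ioi (0 : ℝ),
          (ENNReal.ofReal t * μ {x | ENNReal.ofReal t < g x} ^ (1 / p)) ^ q.toReal /
            ENNReal.ofReal t) ^ (1 / q.toReal)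

/-- The centered Hardy–Littlewood maximal function (balls of zero or infinite measure
are omitted from the supremum). -/
noncomputable def cMax {X : Type*} [MetricSpace X] [MeasurableSpace X]
    (μ : Measure X) (f : X → ℝ) (x : X) : ℝ≥0∞ :=
  ⨆ (s : ℝ) (_ : 0 < s) (_ : 0 < μ (Metric.ball x s)) (_ : μ (Metric.ball x s) < ⊤),
    (μ (Metric.ball x s))⁻¹ * ∫⁻ y in Metric.ball x s, ENNReal.ofReal |f y| ∂μ


lemma rpow_sub_one_mul {a : ℝ≥0∞} (ha : a ≠ ⊤) (q' : ℝ) (hq' : 1 ≤ q') :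
    a ^ (q' - 1) * a = a ^ q' := by
  rcases eq_or_ne a 0 with rfl | h0
  · rw [mul_zero, eq_comm, ENNReal.zero_rpow_of_pos (by linarith)]
  · have : a ^ (q' - 1) * a ^ (1:ℝ) = a ^ (q' - 1 + 1) := (ENNReal.rpow_add _ _ h0 ha).symm
    rw [ENNReal.rpow_one] at this
    rw [this]; norm_num

lemma phi_eq (p q' t : ℝ) (ht : 0 < t) (hq' : 1 ≤ q') (d : ℝ≥0∞) :
    (ENNReal.ofReal t * d ^ (1 / p)) ^ q' / ENNReal.ofReal t
      = (ENNReal.ofReal t) ^ (q' - 1) * d ^ (q' / p) := by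
  have h0 : ENNReal.ofReal t ≠ 0 := by simp [ht]
  have hT : ENNReal.ofReal t ≠ ⊤ := ENNReal.ofReal_ne_top
  have h1 : (d ^ (1 / p)) ^ q' = d ^ (q' / p) := by
    rw [← ENNReal.rpow_mul]
    congr 1
    ring
  rw [ENNReal.mul_rpow_of_nonneg _ _ (by linarith : (0:ℝ) ≤ q'), h1,
    ← rpow_sub_one_mul hT q' hq', div_eq_mul_inv, mul_assoc]
  have : ENNReal.ofReal t ^ (q' - 1) * ENNReal.ofReal t * (d ^ (q' / p) * (ENNReal.ofReal t)⁻¹)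
      = ENNReal.ofReal t ^ (q' - 1) * d ^ (q' / p) * (ENNReal.ofReal t * (ENNReal.ofReal t)⁻¹) := by
    ring
  rw [this, ENNReal.mul_inv_cancel h0 hT, mul_one]

lemma cover_aux (v : ℕ → ℝ) (N : ℕ) (hanti : Antitone v) (hvN : v N = 0)
    (t : ℝ) (ht : 0 < t) (ht0 : t ≤ v 0) : ∃ k, k < N ∧ v (k + 1) < t ∧ t ≤ v k := by
  classical
  set P : ℕ → Prop := fun j => t ≤ v j with hP
  set k := Nat.findGreatest P N with hk
  have hPk : P k := Nat.findGreatest_spec (Nat.zero_le N) ht0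
  have hkN : k ≤ N := Nat.findGreatest_le N
  have hkN' : k < N := by
    rcases lt_or_eq_of_le hkN with h | h
    · exact h
    · exfalso; rw [hP] at hPk; rw [h, hvN] at hPk; linarith
  refine ⟨k, hkN', ?_, hPk⟩
  have := Nat.findGreatest_is_greatest (P := P) (n := N) (k := k + 1) (by omega) (by omega)
  simpa [P] using not_le.mp this


lemma exists_groups (m : ℕ → ℝ) (hm : ∀ i, 0 < m i) (N : ℕ) :
    ∃ S : ℕ → Finset ℕ,
      (∀ k l, k < l → Disjoint (S k) (S l)) ∧
      (∀ k, N ≤ k → S k = ∅) ∧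
      (∀ k, k < N → (S k).Nonempty) ∧
      (∀ k, k < N → 2 * ∑ j ∈ Finset.range k, ∑ i ∈ S j, m i ≤ ∑ i ∈ S k, m i) := by
  classical
  by_cases hA : ∃ ε : ℝ, 0 < ε ∧ {i | ε ≤ m i}.Infinite
  · obtain ⟨ε, hε, hinf⟩ := hA
    have step : ∀ u : Finset ℕ, ∃ T : Finset ℕ, ↑T ⊆ {i | ε ≤ m i} \ ↑u ∧
        T.card = ⌈(2 * ∑ i ∈ u, m i) / ε⌉₊ + 1 := fun u =>
      (hinf.diff u.finite_toSet).exists_subset_card_eq _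
    choose T hT hTcard using step
    set U : ℕ → Finset ℕ := fun k => Nat.rec ∅ (fun _ u => u ∪ T u) k with hU
    have hUsucc : ∀ k, U (k + 1) = U k ∪ T (U k) := fun k => rfl
    have hTdisj : ∀ u : Finset ℕ, ∀ i ∈ T u, i ∉ u := by
      intro u i hi
      have := hT u (Finset.mem_coe.mpr hi)
      exact fun hiu => this.2 (Finset.mem_coe.mpr hiu)
    have hTball : ∀ u : Finset ℕ, ∀ i ∈ T u, ε ≤ m i := by
      intro u i hi
      exact (hT u (Finset.mem_coe.mpr hi)).1
    have hUmono : ∀ k l, k ≤ l → U k ⊆ U l := by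
      intro k l hkl
      induction l with
      | zero => simp at hkl; subst hkl; exact subset_rfl
      | succ n ih =>
        rcases Nat.lt_or_ge k (n + 1) with h | h
        · exact (ih (by omega)).trans (by rw [hUsucc]; exact Finset.subset_union_left)
        · have : k = n + 1 := by omega
          subst this; exact subset_rfl
    have hTsubU : ∀ k, T (U k) ⊆ U (k + 1) := fun k => by
      rw [hUsucc]; exact Finset.subset_union_right
    have hUsum : ∀ k, ∑ i ∈ U k, m i = ∑ j ∈ Finset.range k, ∑ i ∈ T (U j), m i := by
      intro k
      induction k with
      | zero => simp [hU]
      | succ n ih =>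
        rw [hUsucc, Finset.sum_union (Finset.disjoint_left.mpr
          (fun i hiU hiT => hTdisj (U n) i hiT hiU)), ih, Finset.sum_range_succ]
    have hTsum : ∀ u : Finset ℕ, 2 * ∑ i ∈ u, m i ≤ ∑ i ∈ T u, m i := by
      intro u
      have h1 : (T u).card • ε ≤ ∑ i ∈ T u, m i :=
        Finset.card_nsmul_le_sum _ _ _ (fun i hi => hTball u i hi)
      rw [hTcard] at h1
      have h2 : (2 * ∑ i ∈ u, m i) / ε ≤ (⌈(2 * ∑ i ∈ u, m i) / ε⌉₊ : ℝ) := Nat.le_ceil _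
      have h3 : ((⌈(2 * ∑ i ∈ u, m i) / ε⌉₊ + 1 : ℕ) : ℝ) * ε
          = (⌈(2 * ∑ i ∈ u, m i) / ε⌉₊ : ℝ) * ε + ε := by push_cast; ring
      have h4 : 2 * ∑ i ∈ u, m i ≤ ((⌈(2 * ∑ i ∈ u, m i) / ε⌉₊ + 1 : ℕ) : ℝ) * ε := by
        rw [h3]
        have : (2 * ∑ i ∈ u, m i) ≤ (⌈(2 * ∑ i ∈ u, m i) / ε⌉₊ : ℝ) * ε := by
          rw [← div_le_iff₀ hε] at *
          exact h2
        linarith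
      calc 2 * ∑ i ∈ u, m i ≤ ((⌈(2 * ∑ i ∈ u, m i) / ε⌉₊ + 1 : ℕ) : ℝ) * ε := h4
        _ = (⌈(2 * ∑ i ∈ u, m i) / ε⌉₊ + 1 : ℕ) • ε := by rw [nsmul_eq_mul]
        _ ≤ ∑ i ∈ T u, m i := h1
    refine ⟨fun k => if k < N then T (U k) else ∅, ?_, ?_, ?_, ?_⟩
    · intro k l hkl
      by_cases hl : l < N
      · by_cases hk : k < N
        · simp only [if_pos hk, if_pos hl]
          refine Finset.disjoint_left.mpr fun i hik hil => ?_
          exact hTdisj (U l) i hil (hUmono (k + 1) l hkl ((hTsubU k) hik))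
        · simp [if_neg hk]
      · simp [if_neg hl]
    · intro k hk; simp [if_neg (not_lt.mpr hk)]
    · intro k hk
      simp only [if_pos hk]
      rw [← Finset.card_pos, hTcard]
      omega
    · intro k hk
      simp only [if_pos hk]
      have : ∑ j ∈ Finset.range k, ∑ i ∈ (if j < N then T (U j) else ∅), m i
          = ∑ j ∈ Finset.range k, ∑ i ∈ T (U j), m i := by
        refine Finset.sum_congr rfl fun j hj => ?_
        rw [if_pos (lt_trans (Finset.mem_range.mp hj) hk)]
      rw [this, ← hUsum]
      exact hTsum (U k)
  · push_neg at hA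
    have hB : ∀ ε : ℝ, 0 < ε → {i | ε ≤ m i}.Finite := by
      intro ε hε
      exact hA ε hε
    have step2 : ∀ (u : Finset ℕ) (δ : ℝ), ∃ i, i ∉ u ∧ (0 < δ → m i < δ) := by
      intro u δ
      by_cases hδ : 0 < δ
      · have hfin : ({i | δ ≤ m i} ∪ ↑u).Finite := (hB δ hδ).union u.finite_toSet
        obtain ⟨i, hi⟩ := hfin.infinite_compl.nonempty
        rw [Set.mem_compl_iff, Set.mem_union] at hi
        push_neg at hi
        exact ⟨i, fun h => hi.2 (Finset.mem_coe.mpr h), fun _ => not_le.mp hi.1⟩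
      · obtain ⟨i, hi⟩ := u.finite_toSet.infinite_compl.nonempty
        exact ⟨i, fun h => hi (Finset.mem_coe.mpr h), fun h => absurd h hδ⟩
    choose g hg1 hg2 using step2
    set F : ℕ → Finset ℕ × ℕ := fun k => Nat.rec (⟨{g ∅ 1}, g ∅ 1⟩)
      (fun _ st => ⟨insert (g st.1 (m st.2 / 4)) st.1, g st.1 (m st.2 / 4)⟩) k with hF
    set j : ℕ → ℕ := fun k => (F k).2 with hj
    set used : ℕ → Finset ℕ := fun k => (F k).1 with hused
    have hFsucc : ∀ k, F (k + 1) = ⟨insert (g (used k) (m (j k) / 4)) (used k),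
        g (used k) (m (j k) / 4)⟩ := fun k => rfl
    have hjmem : ∀ k, j k ∈ used k := by
      intro k
      cases k with
      | zero => simp [hj, hused, hF]
      | succ n => exact Finset.mem_insert_self _ _
    have husedmono : ∀ k, used k ⊆ used (k + 1) := by
      intro k
      exact Finset.subset_insert _ _
    have husedmono' : ∀ k l, k ≤ l → used k ⊆ used l := by
      intro k l hkl
      induction l with
      | zero => simp at hkl; subst hkl; exact subset_rfl
      | succ n ih =>
        rcases Nat.lt_or_ge k (n + 1) with h | h
        · exact (ih (by omega)).trans (husedmono n)
        · have : k = n + 1 := by omega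
          subst this; exact subset_rfl
    have hjfresh : ∀ k, j (k + 1) ∉ used k := by
      intro k
      exact hg1 _ _
    have hdec : ∀ k, m (j (k + 1)) < m (j k) / 4 := by
      intro k
      exact hg2 (used k) (m (j k) / 4) (by linarith [hm (j k)])
    have hjne : ∀ k l, k < l → j k ≠ j l := by
      intro k l hkl heq
      have h1 : j k ∈ used (l - 1) := husedmono' k (l - 1) (by omega) (hjmem k)
      have h2 : j l ∉ used (l - 1) := by
        have : l - 1 + 1 = l := by omega
        rw [← this]
        exact hjfresh (l - 1)
      rw [← heq] at h2
      exact h2 h1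
    refine ⟨fun k => if k < N then {j (N - 1 - k)} else ∅, ?_, ?_, ?_, ?_⟩
    · intro k l hkl
      by_cases hl : l < N
      · by_cases hk : k < N
        · simp only [if_pos hk, if_pos hl, Finset.disjoint_singleton]
          have : N - 1 - l < N - 1 - k := by omega
          exact (hjne _ _ this).symm
        · simp [if_neg hk]
      · simp [if_neg hl]
    · intro k hk; simp [if_neg (not_lt.mpr hk)]
    · intro k hk; simp [if_pos hk]
    · intro k hk
      simp only [if_pos hk]
      have key : ∀ k, k < N → 2 * ∑ l ∈ Finset.range k, m (j (N - 1 - l)) ≤ m (j (N - 1 - k)) := by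
        intro k
        induction k with
        | zero => intro _; simpa using (hm (j (N - 1))).le
        | succ n ih =>
          intro hn
          have hn' : n < N := by omega
          have ihn := ih hn'
          have harith : N - 1 - (n + 1) + 1 = N - 1 - n := by omega
          have hstep : m (j (N - 1 - n)) < m (j (N - 1 - (n + 1))) / 4 := by
            have := hdec (N - 1 - (n + 1))
            rw [harith] at this
            exact this
          rw [Finset.sum_range_succ]
          nlinarith [hm (j (N - 1 - n)), hm (j (N - 1 - (n + 1)))]
      have heq : ∑ l ∈ Finset.range k, ∑ i ∈ (if l < N then ({j (N - 1 - l)} : Finset ℕ) else ∅), m i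
          = ∑ l ∈ Finset.range k, m (j (N - 1 - l)) := by
        refine Finset.sum_congr rfl fun l hl => ?_
        rw [if_pos (lt_trans (Finset.mem_range.mp hl) hk)]
        simp
      rw [heq, Finset.sum_singleton]
      exact key k hk


lemma upper_int (p : ℝ) (hp : 0 < p) (q' : ℝ) (hq' : 1 ≤ q')
    (v : ℕ → ℝ) (N : ℕ) (hv0 : ∀ k, 0 ≤ v k) (hanti : Antitone v) (hvN : v N = 0)
    (M : ℕ → ℝ≥0∞) (D : ℝ → ℝ≥0∞)
    (hD0 : ∀ t : ℝ, 0 < t → v 0 < t → D t = 0)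
    (hD : ∀ k, k < N → ∀ t : ℝ, 0 < t → v (k + 1) < t → t ≤ v k → D t ≤ M k) :
    ∫⁻ t in Set.Ioi (0:ℝ), (ENNReal.ofReal t * D t ^ (1 / p)) ^ q' / ENNReal.ofReal t
      ≤ ∑ k ∈ Finset.range N, (ENNReal.ofReal (v k)) ^ q' * M k ^ (q' / p) := by
  set C : ℕ → ℝ≥0∞ := fun k => (ENNReal.ofReal (v k)) ^ (q' - 1) * M k ^ (q' / p) with hC
  set ψ : ℝ → ℝ≥0∞ := fun t =>
    ∑ k ∈ Finset.range N, (Set.Ioc (v (k + 1)) (v k)).indicator (fun _ => C k) t with hψ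
  have hpoint : ∀ t ∈ Set.Ioi (0:ℝ),
      (ENNReal.ofReal t * D t ^ (1 / p)) ^ q' / ENNReal.ofReal t ≤ ψ t := by
    intro t ht
    rw [Set.mem_Ioi] at ht
    rw [phi_eq p q' t ht hq']
    rcases lt_or_ge (v 0) t with h0 | h0
    · rw [hD0 t ht h0, ENNReal.zero_rpow_of_pos (by positivity), mul_zero]
      exact zero_le
    · obtain ⟨k, hkN, hk1, hk2⟩ := cover_aux v N hanti hvN t ht h0
      have hmem : t ∈ Set.Ioc (v (k + 1)) (v k) := ⟨hk1, hk2⟩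
      have hle : (ENNReal.ofReal t) ^ (q' - 1) * D t ^ (q' / p) ≤ C k := by
        refine mul_le_mul' (ENNReal.rpow_le_rpow (ENNReal.ofReal_le_ofReal hk2) (by linarith))
          (ENNReal.rpow_le_rpow (hD k hkN t ht hk1 hk2) (by positivity))
      refine hle.trans ?_
      calc C k = (Set.Ioc (v (k + 1)) (v k)).indicator (fun _ => C k) t := by
            rw [Set.indicator_of_mem hmem]
        _ ≤ ∑ j ∈ Finset.range N, (Set.Ioc (v (j + 1)) (v j)).indicator (fun _ => C j) t :=
            Finset.single_le_sum
              (f := fun j => (Set.Ioc (v (j + 1)) (v j)).indicator (fun _ => C j) t)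
              (fun j _ => zero_le) (Finset.mem_range.mpr hkN)
        _ = ψ t := rfl
  calc ∫⁻ t in Set.Ioi (0:ℝ), (ENNReal.ofReal t * D t ^ (1 / p)) ^ q' / ENNReal.ofReal t
      ≤ ∫⁻ t in Set.Ioi (0:ℝ), ψ t := setLIntegral_mono' measurableSet_Ioi hpoint
    _ ≤ ∫⁻ t, ψ t := setLIntegral_le_lintegral _ _
    _ = ∑ k ∈ Finset.range N, C k * ENNReal.ofReal (v k - v (k + 1)) := by
        rw [hψ, lintegral_finset_sum]
        · congr 1
          ext k
          rw [lintegral_indicator measurableSet_Ioc, setLIntegral_const, Real.volume_Ioc]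
        · exact fun k _ => Measurable.indicator measurable_const measurableSet_Ioc
    _ ≤ ∑ k ∈ Finset.range N, (ENNReal.ofReal (v k)) ^ q' * M k ^ (q' / p) := by
        refine Finset.sum_le_sum fun k _ => ?_
        have h1 : ENNReal.ofReal (v k - v (k + 1)) ≤ ENNReal.ofReal (v k) :=
          ENNReal.ofReal_le_ofReal (by linarith [hv0 (k + 1)])
        calc C k * ENNReal.ofReal (v k - v (k + 1)) ≤ C k * ENNReal.ofReal (v k) :=
              mul_le_mul_right h1 _
          _ = (ENNReal.ofReal (v k)) ^ q' * M k ^ (q' / p) := by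
              rw [hC]
              have : (ENNReal.ofReal (v k)) ^ (q' - 1) * M k ^ (q' / p) * ENNReal.ofReal (v k)
                  = (ENNReal.ofReal (v k)) ^ (q' - 1) * ENNReal.ofReal (v k) * M k ^ (q' / p) := by
                ring
              rw [this, rpow_sub_one_mul ENNReal.ofReal_ne_top q' hq']

lemma lower_int (p : ℝ) (hp : 0 < p) (r' : ℝ) (hr' : 1 ≤ r')
    (lam : ℝ) (hlam0 : 0 < lam) (hlam1 : lam < 1)
    (v : ℕ → ℝ) (N : ℕ) (hv0 : ∀ k, 0 ≤ v k)
    (hsep : ∀ k, v (k + 1) ≤ lam * v k)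
    (M : ℕ → ℝ≥0∞) (D : ℝ → ℝ≥0∞)
    (hD : ∀ k, k < N → ∀ t : ℝ, lam * v k < t → t < v k → M k ≤ D t) :
    ∑ k ∈ Finset.range N,
        (ENNReal.ofReal (lam * v k)) ^ (r' - 1) * M k ^ (r' / p)
          * ENNReal.ofReal (v k - lam * v k)
      ≤ ∫⁻ t in Set.Ioi (0:ℝ), (ENNReal.ofReal t * D t ^ (1 / p)) ^ r' / ENNReal.ofReal t := by
  have hanti : Antitone v := antitone_nat_of_succ_le fun k =>
    (hsep k).trans (by nlinarith [hv0 k])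
  set C : ℕ → ℝ≥0∞ := fun k => (ENNReal.ofReal (lam * v k)) ^ (r' - 1) * M k ^ (r' / p) with hC
  set ψ : ℝ → ℝ≥0∞ := fun t =>
    ∑ k ∈ Finset.range N, (Set.Ioo (lam * v k) (v k)).indicator (fun _ => C k) t with hψ
  have huniq : ∀ k l : ℕ, ∀ t : ℝ, t ∈ Set.Ioo (lam * v k) (v k) →
      t ∈ Set.Ioo (lam * v l) (v l) → k = l := by
    intro k l t hk hl
    by_contra hne
    rcases Nat.lt_or_ge k l with h | h
    · have h1 : v l ≤ v (k + 1) := hanti h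
      have := hsep k
      exact absurd (hl.2.trans_le (h1.trans this)) (not_lt.mpr hk.1.le)
    · have hlk : l < k := lt_of_le_of_ne h (Ne.symm hne)
      have h1 : v k ≤ v (l + 1) := hanti hlk
      have := hsep l
      exact absurd (hk.2.trans_le (h1.trans this)) (not_lt.mpr hl.1.le)
  have hpoint : ∀ t ∈ Set.Ioi (0:ℝ),
      ψ t ≤ (ENNReal.ofReal t * D t ^ (1 / p)) ^ r' / ENNReal.ofReal t := by
    intro t ht
    rw [Set.mem_Ioi] at ht
    rw [phi_eq p r' t ht hr']
    by_cases h : ∃ k, k < N ∧ t ∈ Set.Ioo (lam * v k) (v k)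
    · obtain ⟨k, hkN, hmem⟩ := h
      have hψt : ψ t = C k := by
        rw [hψ]
        refine Finset.sum_eq_single_of_mem k (Finset.mem_range.mpr hkN) ?_ |>.trans
          (Set.indicator_of_mem hmem _)
        intro j _ hj
        exact Set.indicator_of_notMem (fun hmem' => hj (huniq j k t hmem' hmem)) _
      rw [hψt, hC]
      exact mul_le_mul' (ENNReal.rpow_le_rpow (ENNReal.ofReal_le_ofReal hmem.1.le) (by linarith))
        (ENNReal.rpow_le_rpow (hD k hkN t hmem.1 hmem.2) (by positivity))
    · have hψt : ψ t = 0 := by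
        rw [hψ]
        refine Finset.sum_eq_zero fun k hk => ?_
        refine Set.indicator_of_notMem (fun hmem => h ⟨k, Finset.mem_range.mp hk, hmem⟩) _
      rw [hψt]; exact zero_le
  calc ∑ k ∈ Finset.range N, C k * ENNReal.ofReal (v k - lam * v k)
      = ∫⁻ t in Set.Ioi (0:ℝ), ψ t := by
        rw [hψ]
        rw [lintegral_finset_sum]
        · congr 1
          ext k
          rw [lintegral_indicator measurableSet_Ioo, Measure.restrict_restrict measurableSet_Ioo,
            setLIntegral_const]
          have hsub : Set.Ioo (lam * v k) (v k) ∩ Set.Ioi (0:ℝ) = Set.Ioo (lam * v k) (v k) := by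
            refine Set.inter_eq_left.mpr fun x hx => ?_
            have : 0 ≤ lam * v k := mul_nonneg hlam0.le (hv0 k)
            exact lt_of_le_of_lt this hx.1
          rw [hsub, Real.volume_Ioo]
        · exact fun k _ => Measurable.indicator measurable_const measurableSet_Ioo
    _ ≤ _ := setLIntegral_mono' measurableSet_Ioi hpoint


lemma dist_le_max {X : Type*} [MetricSpace X] [MeasurableSpace X] [OpensMeasurableSpace X]
    (μ : Measure X)
    (hsupp : μ {x : X | ¬ ∀ s : ℝ, 0 < s → 0 < μ (Metric.ball x s)} = 0)
    (f : X → ℝ)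
    (hloc : ∀ x : X, f x ≠ 0 → ∃ c₀ : X, ∃ s₀ : ℝ, x ∈ Metric.ball c₀ s₀ ∧
      μ (Metric.ball c₀ s₀) < ⊤ ∧ ∀ y ∈ Metric.ball c₀ s₀, f y = f x)
    (t : ℝ) (ht : 0 < t) :
    μ {x | ENNReal.ofReal t < ENNReal.ofReal |f x|} ≤ μ {x | ENNReal.ofReal t < cMax μ f x} := by
  set bad := {x : X | ¬ ∀ s : ℝ, 0 < s → 0 < μ (Metric.ball x s)} with hbad
  have hsubset : {x | ENNReal.ofReal t < ENNReal.ofReal |f x|}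
      ⊆ {x | ENNReal.ofReal t < cMax μ f x} ∪ bad := by
    intro x hx
    by_cases hxbad : x ∈ bad
    · exact Or.inr hxbad
    left
    rw [Set.mem_setOf_eq] at hx
    have htf : t < |f x| := (ENNReal.ofReal_lt_ofReal_iff_of_nonneg ht.le).mp hx
    have hfne : f x ≠ 0 := by
      intro h; rw [h] at htf; simp at htf; linarith
    obtain ⟨c₀, s₀, hmem, hfin, hconst⟩ := hloc x hfne
    have hgood : ∀ s : ℝ, 0 < s → 0 < μ (Metric.ball x s) := not_not.mp hxbad
    set ρ := s₀ - dist x c₀ with hρdef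
    have hρ : 0 < ρ := by
      have := Metric.mem_ball.mp hmem
      simp [hρdef]; linarith
    have hsub : Metric.ball x ρ ⊆ Metric.ball c₀ s₀ :=
      Metric.ball_subset_ball' (by simp [hρdef])
    have hpos : 0 < μ (Metric.ball x ρ) := hgood ρ hρ
    have hfin' : μ (Metric.ball x ρ) < ⊤ := lt_of_le_of_lt (measure_mono hsub) hfin
    have hint : ∫⁻ y in Metric.ball x ρ, ENNReal.ofReal |f y| ∂μ
        = ENNReal.ofReal |f x| * μ (Metric.ball x ρ) := by
      rw [setLIntegral_congr_fun measurableSet_ball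
        (fun y hy => by rw [hconst y (hsub hy)]), setLIntegral_const]
    have hval : (μ (Metric.ball x ρ))⁻¹ * ∫⁻ y in Metric.ball x ρ, ENNReal.ofReal |f y| ∂μ
        = ENNReal.ofReal |f x| := by
      rw [hint, mul_comm (ENNReal.ofReal |f x|), ← mul_assoc,
        ENNReal.inv_mul_cancel hpos.ne' hfin'.ne, one_mul]
    rw [Set.mem_setOf_eq]
    calc ENNReal.ofReal t < ENNReal.ofReal |f x| := hx
      _ = (μ (Metric.ball x ρ))⁻¹ * ∫⁻ y in Metric.ball x ρ, ENNReal.ofReal |f y| ∂μ := hval.symm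
      _ ≤ cMax μ f x :=
          le_iSup_of_le ρ (le_iSup_of_le hρ (le_iSup_of_le hpos (le_iSup_of_le hfin' le_rfl)))
  calc μ {x | ENNReal.ofReal t < ENNReal.ofReal |f x|}
      ≤ μ ({x | ENNReal.ofReal t < cMax μ f x} ∪ bad) := measure_mono hsubset
    _ ≤ μ {x | ENNReal.ofReal t < cMax μ f x} + μ bad := measure_union_le _ _
    _ = μ {x | ENNReal.ofReal t < cMax μ f x} := by rw [hsupp, add_zero]


lemma exists_sets {X : Type*} [MetricSpace X] [MeasurableSpace X] [OpensMeasurableSpace X]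
    (μ : Measure X)
    (c : ℕ → X) (s : ℕ → ℝ)
    (hdisj : Pairwise fun i j => Disjoint (Metric.ball (c i) (s i)) (Metric.ball (c j) (s j)))
    (hpos : ∀ n, 0 < μ (Metric.ball (c n) (s n)))
    (hfin : ∀ n, μ (Metric.ball (c n) (s n)) < ⊤) (N : ℕ) :
    ∃ E : ℕ → Set X,
      (∀ k, MeasurableSet (E k)) ∧
      (∀ k l, k ≠ l → Disjoint (E k) (E l)) ∧
      (∀ k, N ≤ k → E k = ∅) ∧
      (∀ k, k < N → 0 < μ (E k)) ∧
      (∀ k, μ (E k) < ⊤) ∧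
      (∀ k, k < N → 2 * ∑ j ∈ Finset.range k, μ (E j) ≤ μ (E k)) ∧
      (∀ k x, x ∈ E k → ∃ c₀ : X, ∃ s₀ : ℝ, x ∈ Metric.ball c₀ s₀ ∧ Metric.ball c₀ s₀ ⊆ E k) := by
  classical
  set m : ℕ → ℝ := fun i => (μ (Metric.ball (c i) (s i))).toReal with hm
  have hmpos : ∀ i, 0 < m i := fun i => ENNReal.toReal_pos (hpos i).ne' (hfin i).ne
  obtain ⟨S, hSdisj, hSempty, hSne, hSsum⟩ := exists_groups m hmpos N
  set E : ℕ → Set X := fun k => ⋃ i ∈ S k, Metric.ball (c i) (s i) with hE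
  have hmeas : ∀ k, MeasurableSet (E k) := fun k =>
    MeasurableSet.biUnion (S k).countable_toSet (fun i _ => measurableSet_ball)
  have hmu : ∀ k, μ (E k) = ∑ i ∈ S k, μ (Metric.ball (c i) (s i)) := by
    intro k
    rw [hE]
    exact measure_biUnion_finset (fun i _ j _ hij => hdisj hij)
      (fun i _ => measurableSet_ball)
  have hEfin : ∀ k, μ (E k) < ⊤ := by
    intro k
    rw [hmu]
    exact ENNReal.sum_lt_top.mpr (fun i _ => hfin i)
  have hmutoReal : ∀ k, (μ (E k)).toReal = ∑ i ∈ S k, m i := by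
    intro k
    rw [hmu, ENNReal.toReal_sum (fun i _ => (hfin i).ne)]
  refine ⟨E, hmeas, ?_, ?_, ?_, hEfin, ?_, ?_⟩
  · intro k l hkl
    rw [Set.disjoint_left]
    intro x hxk hxl
    simp only [hE, Set.mem_iUnion] at hxk hxl
    obtain ⟨i, hiS, hxi⟩ := hxk
    obtain ⟨i', hiS', hxi'⟩ := hxl
    have hii' : i ≠ i' := by
      intro h
      subst h
      rcases Nat.lt_or_ge k l with h | h
      · exact Finset.disjoint_left.mp (hSdisj k l h) hiS hiS'
      · exact Finset.disjoint_left.mp (hSdisj l k (lt_of_le_of_ne h (Ne.symm hkl))) hiS' hiS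
    exact Set.disjoint_left.mp (hdisj hii') hxi hxi'
  · intro k hk
    rw [hE]
    simp [hSempty k hk]
  · intro k hk
    obtain ⟨i, hi⟩ := hSne k hk
    calc (0:ℝ≥0∞) < μ (Metric.ball (c i) (s i)) := hpos i
      _ ≤ μ (E k) := measure_mono (fun y hy => Set.mem_biUnion hi hy)
  · intro k hk
    have h2 : (2 * ∑ j ∈ Finset.range k, μ (E j)) ≠ ⊤ := by
      refine ENNReal.mul_ne_top (by norm_num) ?_
      exact (ENNReal.sum_lt_top.mpr (fun j _ => hEfin j)).ne
    rw [← ENNReal.toReal_le_toReal h2 (hEfin k).ne]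
    rw [ENNReal.toReal_mul, ENNReal.toReal_sum (fun j _ => (hEfin j).ne), hmutoReal]
    have : ∀ j ∈ Finset.range k, (μ (E j)).toReal = ∑ i ∈ S j, m i := fun j _ => hmutoReal j
    rw [Finset.sum_congr rfl this]
    simpa using hSsum k hk
  · intro k x hx
    simp only [hE, Set.mem_iUnion] at hx
    obtain ⟨i, hiS, hxi⟩ := hx
    exact ⟨c i, s i, hxi, fun y hy => Set.mem_biUnion hiS hy⟩


lemma per_N {X : Type*} [MetricSpace X] [MeasurableSpace X] [OpensMeasurableSpace X]
    (μ : Measure X)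
    (hsupp : μ {x : X | ¬ ∀ s : ℝ, 0 < s → 0 < μ (Metric.ball x s)} = 0)
    (p : ℝ) (hp : 1 < p) (q r : ℝ≥0∞) (hq : 1 ≤ q) (hr1 : 1 ≤ r.toReal) (hrtop : r ≠ ⊤)
    (b : ℕ → ℝ) (hb0 : ∀ k, 0 < b k) (hb1 : ∀ k, b k ≤ 1) (hbanti : ∀ k, b (k + 1) ≤ b k)
    (N : ℕ) (E : ℕ → Set X)
    (hmeas : ∀ k, MeasurableSet (E k))
    (hdisjE : ∀ k l, k ≠ l → Disjoint (E k) (E l))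
    (hEempty : ∀ k, N ≤ k → E k = ∅)
    (hEpos : ∀ k, k < N → 0 < μ (E k))
    (hEfin : ∀ k, μ (E k) < ⊤)
    (hEdoub : ∀ k, k < N → 2 * ∑ j ∈ Finset.range k, μ (E j) ≤ μ (E k))
    (hEball : ∀ k x, x ∈ E k → ∃ c₀ : X, ∃ s₀ : ℝ,
      x ∈ Metric.ball c₀ s₀ ∧ Metric.ball c₀ s₀ ⊆ E k) :
    ∃ f : X → ℝ, Measurable f ∧
      (q = ⊤ → lNormE μ p q (fun x => ENNReal.ofReal |f x|) ≤ (2:ℝ≥0∞) ^ (1/p)) ∧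
      (q ≠ ⊤ → lNormE μ p q (fun x => ENNReal.ofReal |f x|) ≤
        ENNReal.ofReal p ^ (1/q.toReal) *
          ((2:ℝ≥0∞) ^ (q.toReal/p)
            * ENNReal.ofReal (∑ k ∈ Finset.range N, b k ^ q.toReal)) ^ (1/q.toReal)) ∧
      ENNReal.ofReal ((((2:ℝ) ^ (-(1/p))) ^ (r.toReal - 1) * (1 - (2:ℝ) ^ (-(1/p))))
          * ∑ k ∈ Finset.range N, b k ^ r.toReal) ^ (1/r.toReal)
        ≤ lNormE μ p r (cMax μ f) := by
  classical
  have hppos : 0 < p := by linarith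
  have hppos' : 0 < 1/p := by positivity
  set m' : ℕ → ℝ := fun k => (μ (E k)).toReal with hm'
  have hm'pos : ∀ k, k < N → 0 < m' k := fun k hk =>
    ENNReal.toReal_pos (hEpos k hk).ne' (hEfin k).ne
  set lam : ℝ := (2:ℝ) ^ (-(1/p)) with hlamdef
  have hlam0 : 0 < lam := Real.rpow_pos_of_pos two_pos _
  have hlam1 : lam < 1 := Real.rpow_lt_one_of_one_lt_of_neg one_lt_two (by linarith)
  set v : ℕ → ℝ := fun k => if k < N then b k * m' k ^ (-(1/p)) else 0 with hv
  have hvpos : ∀ k, k < N → 0 < v k := by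
    intro k hk
    simp only [hv, if_pos hk]
    exact mul_pos (hb0 k) (Real.rpow_pos_of_pos (hm'pos k hk) _)
  have hv0 : ∀ k, 0 ≤ v k := by
    intro k
    by_cases hk : k < N
    · exact (hvpos k hk).le
    · simp [hv, if_neg hk]
  have hvN : v N = 0 := by simp [hv]
  have hmono : ∀ x y : ℝ, 0 < x → x ≤ y → y ^ (-(1/p)) ≤ x ^ (-(1/p)) := by
    intro x y hx hxy
    rw [Real.rpow_neg hx.le, Real.rpow_neg (hx.trans_le hxy).le]
    exact inv_anti₀ (Real.rpow_pos_of_pos hx _)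
      (Real.rpow_le_rpow hx.le hxy (by positivity))
  have hsep : ∀ k, v (k + 1) ≤ lam * v k := by
    intro k
    by_cases hk1 : k + 1 < N
    · have hkN : k < N := by omega
      have hdub : 2 * μ (E k) ≤ μ (E (k + 1)) := by
        refine le_trans ?_ (hEdoub (k + 1) hk1)
        exact mul_le_mul_right (Finset.single_le_sum (f := fun j => μ (E j))
          (fun j _ => zero_le) (Finset.mem_range.mpr (Nat.lt_succ_self k))) 2
      have hdubr : 2 * m' k ≤ m' (k + 1) := by
        have h2 : (2 * μ (E k)).toReal = 2 * m' k := by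
          rw [ENNReal.toReal_mul]; norm_num; rfl
        have := ENNReal.toReal_mono (hEfin (k + 1)).ne hdub
        rw [h2] at this
        exact this
      have h1 : m' (k + 1) ^ (-(1/p)) ≤ (2 * m' k) ^ (-(1/p)) :=
        hmono _ _ (by linarith [hm'pos k hkN]) hdubr
      have h2 : (2 * m' k) ^ (-(1/p)) = lam * m' k ^ (-(1/p)) := by
        rw [Real.mul_rpow (by norm_num) (hm'pos k hkN).le]
      simp only [hv, if_pos hk1, if_pos hkN]
      calc b (k + 1) * m' (k + 1) ^ (-(1/p)) ≤ b k * ((2 * m' k) ^ (-(1/p))) := by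
            apply mul_le_mul (hbanti k) h1 (Real.rpow_nonneg ?_ _) (hb0 k).le
            positivity
        _ = lam * (b k * m' k ^ (-(1/p))) := by rw [h2]; ring
    · have : v (k + 1) = 0 := by simp [hv, if_neg hk1]
      rw [this]
      exact mul_nonneg hlam0.le (hv0 k)
  have hanti : Antitone v := antitone_nat_of_succ_le fun k =>
    (hsep k).trans (by nlinarith [hv0 k])
  set f : X → ℝ := fun x => ∑ k ∈ Finset.range N, Set.indicator (E k) (fun _ => v k) x with hf
  have hfmeas : Measurable f := by
    apply Finset.measurable_sum
    exact fun k _ => measurable_const.indicator (hmeas k)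
  have hfval : ∀ k, k < N → ∀ x ∈ E k, f x = v k := by
    intro k hk x hx
    show ∑ j ∈ Finset.range N, Set.indicator (E j) (fun _ => v j) x = v k
    rw [Finset.sum_eq_single_of_mem k (Finset.mem_range.mpr hk)
      (fun j _ hj => Set.indicator_of_notMem
        (Set.disjoint_left.mp (hdisjE k j (Ne.symm hj)) hx) _)]
    exact Set.indicator_of_mem hx _
  have hfzero : ∀ x : X, (∀ k, x ∉ E k) → f x = 0 := by
    intro x hx
    show ∑ j ∈ Finset.range N, Set.indicator (E j) (fun _ => v j) x = 0
    exact Finset.sum_eq_zero fun k _ => Set.indicator_of_notMem (hx k) _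
  have hfmem : ∀ x : X, f x ≠ 0 → ∃ k, k < N ∧ x ∈ E k := by
    intro x hx
    by_contra h
    push_neg at h
    refine hx (hfzero x fun k hk => ?_)
    by_cases hkN : k < N
    · exact absurd hk (h k hkN)
    · rw [hEempty k (not_lt.mp hkN)] at hk; exact hk
  have habs : ∀ k, k < N → ∀ x ∈ E k, |f x| = v k := by
    intro k hk x hx
    rw [hfval k hk x hx, abs_of_nonneg (hv0 k)]
  -- distribution upper bounds
  have hDg0 : ∀ t : ℝ, 0 < t → v 0 < t →
      μ {x | ENNReal.ofReal t < ENNReal.ofReal |f x|} = 0 := by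
    intro t ht h0
    convert measure_empty (μ := μ) (α := X)
    rw [Set.eq_empty_iff_forall_notMem]
    intro x hx
    rw [Set.mem_setOf_eq] at hx
    have htf : t < |f x| := (ENNReal.ofReal_lt_ofReal_iff_of_nonneg ht.le).mp hx
    have hfne : f x ≠ 0 := by intro h; rw [h] at htf; simp at htf; linarith
    obtain ⟨k, hkN, hxk⟩ := hfmem x hfne
    rw [habs k hkN x hxk] at htf
    have := hanti (Nat.zero_le k)
    linarith
  have hDgup : ∀ k, k < N → ∀ t : ℝ, 0 < t → v (k + 1) < t → t ≤ v k →
      μ {x | ENNReal.ofReal t < ENNReal.ofReal |f x|} ≤ 2 * μ (E k) := by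
    intro k hk t ht h1 h2
    have hsub : {x | ENNReal.ofReal t < ENNReal.ofReal |f x|}
        ⊆ ⋃ j ∈ Finset.range (k + 1), E j := by
      intro x hx
      rw [Set.mem_setOf_eq] at hx
      have htf : t < |f x| := (ENNReal.ofReal_lt_ofReal_iff_of_nonneg ht.le).mp hx
      have hfne : f x ≠ 0 := by intro h; rw [h] at htf; simp at htf; linarith
      obtain ⟨j, hjN, hxj⟩ := hfmem x hfne
      rw [habs j hjN x hxj] at htf
      have hjk : j ≤ k := by
        by_contra hjk
        push_neg at hjk
        have : v j ≤ v (k + 1) := hanti hjk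
        linarith
      exact Set.mem_biUnion (Finset.mem_range.mpr (by omega)) hxj
    calc μ {x | ENNReal.ofReal t < ENNReal.ofReal |f x|}
        ≤ μ (⋃ j ∈ Finset.range (k + 1), E j) := measure_mono hsub
      _ ≤ ∑ j ∈ Finset.range (k + 1), μ (E j) := measure_biUnion_finset_le _ _
      _ = ∑ j ∈ Finset.range k, μ (E j) + μ (E k) := Finset.sum_range_succ _ _
      _ ≤ μ (E k) + μ (E k) := by
          refine add_le_add_left ?_ _
          refine le_trans ?_ (hEdoub k hk)
          rw [two_mul]
          exact le_add_self
      _ = 2 * μ (E k) := (two_mul _).symm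
  have hloc : ∀ x : X, f x ≠ 0 → ∃ c₀ : X, ∃ s₀ : ℝ, x ∈ Metric.ball c₀ s₀ ∧
      μ (Metric.ball c₀ s₀) < ⊤ ∧ ∀ y ∈ Metric.ball c₀ s₀, f y = f x := by
    intro x hx
    obtain ⟨k, hkN, hxk⟩ := hfmem x hx
    obtain ⟨c₀, s₀, hmem, hsub⟩ := hEball k x hxk
    refine ⟨c₀, s₀, hmem, lt_of_le_of_lt (measure_mono hsub) (hEfin k), fun y hy => ?_⟩
    rw [hfval k hkN y (hsub hy), hfval k hkN x hxk]
  have hDlow : ∀ k, k < N → ∀ t : ℝ, lam * v k < t → t < v k →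
      μ (E k) ≤ μ {x | ENNReal.ofReal t < cMax μ f x} := by
    intro k hk t h1 h2
    have ht : 0 < t := lt_of_le_of_lt (mul_nonneg hlam0.le (hv0 k)) h1
    have hEsub : E k ⊆ {x | ENNReal.ofReal t < ENNReal.ofReal |f x|} := by
      intro x hx
      rw [Set.mem_setOf_eq, habs k hk x hx]
      exact (ENNReal.ofReal_lt_ofReal_iff (hvpos k hk)).mpr h2
    calc μ (E k) ≤ μ {x | ENNReal.ofReal t < ENNReal.ofReal |f x|} := measure_mono hEsub
      _ ≤ μ {x | ENNReal.ofReal t < cMax μ f x} := dist_le_max μ hsupp f hloc t ht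
  -- key real algebra
  have hbm : ∀ k, k < N → ∀ e : ℝ, v k ^ e * m' k ^ (e / p) = b k ^ e := by
    intro k hk e
    have hmk := hm'pos k hk
    have h1 : v k = b k * m' k ^ (-(1/p)) := by simp only [hv, if_pos hk]
    rw [h1, Real.mul_rpow (hb0 k).le (Real.rpow_nonneg hmk.le _),
      ← Real.rpow_mul hmk.le, mul_assoc, ← Real.rpow_add hmk]
    have he : (-(1/p)) * e + e / p = 0 := by field_simp; ring
    rw [he, Real.rpow_zero, mul_one]
  refine ⟨f, hfmeas, ?_, ?_, ?_⟩
  · -- q = ⊤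
    intro hqtop
    have hunf : lNormE μ p q (fun x => ENNReal.ofReal |f x|)
        = ⨆ (t : ℝ) (_ : 0 < t), ENNReal.ofReal t
            * μ {x | ENNReal.ofReal t < ENNReal.ofReal |f x|} ^ (1/p) := by
      unfold lNormE
      rw [if_pos hqtop]
    rw [hunf]
    refine iSup_le fun t => iSup_le fun ht => ?_
    rcases lt_or_ge (v 0) t with h0 | h0
    · rw [hDg0 t ht h0, ENNReal.zero_rpow_of_pos hppos', mul_zero]
      exact zero_le
    · obtain ⟨k, hkN, hk1, hk2⟩ := cover_aux v N hanti hvN t ht h0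
      have hb2 : ENNReal.ofReal t * μ {x | ENNReal.ofReal t < ENNReal.ofReal |f x|} ^ (1/p)
          ≤ ENNReal.ofReal (v k) * (2 * μ (E k)) ^ (1/p) :=
        mul_le_mul' (ENNReal.ofReal_le_ofReal hk2)
          (ENNReal.rpow_le_rpow (hDgup k hkN t ht hk1 hk2) hppos'.le)
      refine hb2.trans ?_
      have hEk : μ (E k) = ENNReal.ofReal (m' k) := (ENNReal.ofReal_toReal (hEfin k).ne).symm
      rw [hEk, ENNReal.mul_rpow_of_nonneg _ _ hppos'.le,
        ENNReal.ofReal_rpow_of_pos (hm'pos k hkN),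
        ← mul_assoc, mul_comm (ENNReal.ofReal (v k)) ((2:ℝ≥0∞) ^ (1/p)), mul_assoc,
        ← ENNReal.ofReal_mul (hv0 k)]
      have hvb : v k * m' k ^ (1/p) = b k := by
        have h2 := hbm k hkN 1
        rw [Real.rpow_one, Real.rpow_one] at h2
        simpa using h2
      rw [hvb]
      calc (2:ℝ≥0∞) ^ (1/p) * ENNReal.ofReal (b k) ≤ (2:ℝ≥0∞) ^ (1/p) * 1 :=
            mul_le_mul_right (ENNReal.ofReal_le_one.mpr (hb1 k)) _
        _ = (2:ℝ≥0∞) ^ (1/p) := mul_one _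
  · -- q < ⊤
    intro hqt
    have hq'1 : 1 ≤ q.toReal := by
      have := ENNReal.toReal_mono hqt hq
      simpa using this
    have hunf : lNormE μ p q (fun x => ENNReal.ofReal |f x|)
        = ENNReal.ofReal p ^ (1/q.toReal) * (∫⁻ t in Set.Ioi (0:ℝ),
            (ENNReal.ofReal t * μ {x | ENNReal.ofReal t < ENNReal.ofReal |f x|} ^ (1/p)) ^ q.toReal
              / ENNReal.ofReal t) ^ (1/q.toReal) := by
      unfold lNormE
      rw [if_neg hqt]
    rw [hunf]
    refine mul_le_mul_right (ENNReal.rpow_le_rpow ?_ (by positivity)) _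
    refine le_trans (upper_int p hppos q.toReal hq'1 v N hv0 hanti hvN
      (fun k => 2 * μ (E k)) _ hDg0 hDgup) ?_
    have hterm : ∀ k ∈ Finset.range N,
        (ENNReal.ofReal (v k)) ^ q.toReal * (2 * μ (E k)) ^ (q.toReal / p)
          = (2:ℝ≥0∞) ^ (q.toReal/p) * ENNReal.ofReal (b k ^ q.toReal) := by
      intro k hkr
      have hkN := Finset.mem_range.mp hkr
      have hEk : μ (E k) = ENNReal.ofReal (m' k) := (ENNReal.ofReal_toReal (hEfin k).ne).symm
      rw [hEk, ENNReal.mul_rpow_of_nonneg _ _ (by positivity),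
        ENNReal.ofReal_rpow_of_pos (hm'pos k hkN),
        ENNReal.ofReal_rpow_of_pos (hvpos k hkN),
        ← mul_assoc, mul_comm (ENNReal.ofReal (v k ^ q.toReal)) ((2:ℝ≥0∞) ^ (q.toReal/p)),
        mul_assoc, ← ENNReal.ofReal_mul (Real.rpow_nonneg (hv0 k) _)]
      rw [hbm k hkN q.toReal]
    rw [Finset.sum_congr rfl hterm, ← Finset.mul_sum,
      ← ENNReal.ofReal_sum_of_nonneg (fun k _ => Real.rpow_nonneg (hb0 k).le _)]
  · -- lower bound
    have hunfr : lNormE μ p r (cMax μ f)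
        = ENNReal.ofReal p ^ (1/r.toReal) * (∫⁻ t in Set.Ioi (0:ℝ),
            (ENNReal.ofReal t * μ {x | ENNReal.ofReal t < cMax μ f x} ^ (1/p)) ^ r.toReal
              / ENNReal.ofReal t) ^ (1/r.toReal) := by
      unfold lNormE
      rw [if_neg hrtop]
    rw [hunfr]
    have hlow := lower_int p hppos r.toReal hr1 lam hlam0 hlam1 v N hv0 hsep
      (fun k => μ (E k)) (fun t => μ {x | ENNReal.ofReal t < cMax μ f x}) hDlow
    have hterm : ∀ k ∈ Finset.range N,
        ENNReal.ofReal ((lam ^ (r.toReal - 1) * (1 - lam)) * b k ^ r.toReal)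
          ≤ (ENNReal.ofReal (lam * v k)) ^ (r.toReal - 1) * (μ (E k)) ^ (r.toReal / p)
            * ENNReal.ofReal (v k - lam * v k) := by
      intro k hkr
      have hkN := Finset.mem_range.mp hkr
      have hEk : μ (E k) = ENNReal.ofReal (m' k) := (ENNReal.ofReal_toReal (hEfin k).ne).symm
      have hvk := hvpos k hkN
      have hlv : 0 < lam * v k := mul_pos hlam0 hvk
      rw [hEk, ENNReal.ofReal_rpow_of_pos hlv, ENNReal.ofReal_rpow_of_pos (hm'pos k hkN),
        ← ENNReal.ofReal_mul (Real.rpow_nonneg hlv.le _),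
        ← ENNReal.ofReal_mul (by positivity)]
      refine ENNReal.ofReal_le_ofReal (le_of_eq ?_)
      have e1 : (lam * v k) ^ (r.toReal - 1) = lam ^ (r.toReal - 1) * v k ^ (r.toReal - 1) :=
        Real.mul_rpow hlam0.le hvk.le
      have e4 := hbm k hkN r.toReal
      have e3 : v k ^ (r.toReal - 1) * v k ^ (1:ℝ) = v k ^ r.toReal := by
        rw [← Real.rpow_add hvk]
        norm_num
      rw [← e4, ← e3, Real.rpow_one, e1]
      ring
    have hsum : ENNReal.ofReal ((lam ^ (r.toReal - 1) * (1 - lam))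
          * ∑ k ∈ Finset.range N, b k ^ r.toReal)
        ≤ ∑ k ∈ Finset.range N, (ENNReal.ofReal (lam * v k)) ^ (r.toReal - 1)
            * (μ (E k)) ^ (r.toReal / p) * ENNReal.ofReal (v k - lam * v k) := by
      rw [Finset.mul_sum, ENNReal.ofReal_sum_of_nonneg (fun k _ =>
        mul_nonneg (mul_nonneg (Real.rpow_nonneg hlam0.le _) (by linarith))
          (Real.rpow_nonneg (hb0 k).le _))]
      exact Finset.sum_le_sum hterm
    have hfinal := hsum.trans hlow
    have h1le : (1:ℝ≥0∞) ≤ ENNReal.ofReal p ^ (1/r.toReal) := by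
      calc (1:ℝ≥0∞) = 1 ^ (1/r.toReal) := (ENNReal.one_rpow _).symm
        _ ≤ ENNReal.ofReal p ^ (1/r.toReal) :=
            ENNReal.rpow_le_rpow (ENNReal.one_le_ofReal.mpr (by linarith)) (by positivity)
    calc ENNReal.ofReal ((lam ^ (r.toReal - 1) * (1 - lam))
          * ∑ k ∈ Finset.range N, b k ^ r.toReal) ^ (1/r.toReal)
        ≤ (∫⁻ t in Set.Ioi (0:ℝ),
            (ENNReal.ofReal t * μ {x | ENNReal.ofReal t < cMax μ f x} ^ (1/p)) ^ r.toReal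
              / ENNReal.ofReal t) ^ (1/r.toReal) :=
          ENNReal.rpow_le_rpow hfinal (by positivity)
      _ ≤ ENNReal.ofReal p ^ (1/r.toReal) * (∫⁻ t in Set.Ioi (0:ℝ),
            (ENNReal.ofReal t * μ {x | ENNReal.ofReal t < cMax μ f x} ^ (1/p)) ^ r.toReal
              / ENNReal.ofReal t) ^ (1/r.toReal) := by
          nth_rewrite 1 [← one_mul ((∫⁻ t in Set.Ioi (0:ℝ),
            (ENNReal.ofReal t * μ {x | ENNReal.ofReal t < cMax μ f x} ^ (1/p)) ^ r.toReal
              / ENNReal.ofReal t) ^ (1/r.toReal))]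
          exact mul_le_mul_left h1le _


theorem stmt_19 {X : Type*} [MetricSpace X] [MeasurableSpace X] [OpensMeasurableSpace X]
    (μ : Measure X)
    (hsupp : μ {x : X | ¬ ∀ s : ℝ, 0 < s → 0 < μ (Metric.ball x s)} = 0)
    (c : ℕ → X) (s : ℕ → ℝ) (hs : ∀ n, 0 < s n)
    (hdisj : Pairwise fun i j => Disjoint (Metric.ball (c i) (s i)) (Metric.ball (c j) (s j)))
    (hpos : ∀ n, 0 < μ (Metric.ball (c n) (s n)))
    (hfin : ∀ n, μ (Metric.ball (c n) (s n)) < ⊤)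
    (p : ℝ) (hp : 1 < p) (q r : ℝ≥0∞) (hq : 1 ≤ q) (hr : 1 ≤ r) (hrq : r < q) :
    ¬ ∃ C : ℝ≥0∞, C < ⊤ ∧ ∀ f : X → ℝ, Measurable f →
        lNormE μ p q (fun x => ENNReal.ofReal |f x|) < ⊤ →
        lNormE μ p r (cMax μ f) ≤ C * lNormE μ p q fun x => ENNReal.ofReal |f x| := by
  rintro ⟨C, hC, hbound⟩
  have hrtop : r ≠ ⊤ := hrq.ne_top
  have hr1 : 1 ≤ r.toReal := by
    have := ENNReal.toReal_mono hrtop hr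
    simpa using this
  have hppos : 0 < p := lt_trans one_pos hp
  set r' : ℝ := r.toReal with hr'def
  have hr'pos : 0 < r' := by linarith
  set s0 : ℝ := if q = ⊤ then r' + 1 else (r' + q.toReal) / 2 with hs0def
  have hr's0 : r' < s0 := by
    rw [hs0def]
    split_ifs with h
    · linarith
    · have hq' : r' < q.toReal := (ENNReal.toReal_lt_toReal hrtop h).mpr hrq
      linarith
  have hs0pos : 0 < s0 := by linarith
  have hs0q : q ≠ ⊤ → s0 < q.toReal := by
    intro h
    rw [hs0def, if_neg h]
    have hq' : r' < q.toReal := (ENNReal.toReal_lt_toReal hrtop h).mpr hrq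
    linarith
  set b : ℕ → ℝ := fun k => ((k:ℝ) + 1) ^ (-(1/s0)) with hbdef
  have hbase : ∀ k : ℕ, (0:ℝ) < (k:ℝ) + 1 := fun k => by positivity
  have hb0 : ∀ k, 0 < b k := fun k => Real.rpow_pos_of_pos (hbase k) _
  have hb1 : ∀ k, b k ≤ 1 := by
    intro k
    have h1 : (1:ℝ) ≤ (k:ℝ) + 1 := by linarith [Nat.cast_nonneg (α := ℝ) k]
    have h2 : -(1/s0) ≤ (0:ℝ) := by
      have : 0 < 1/s0 := by positivity
      linarith
    calc b k ≤ ((k:ℝ) + 1) ^ (0:ℝ) := Real.rpow_le_rpow_of_exponent_le h1 h2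
      _ = 1 := Real.rpow_zero _
  have hmono : ∀ x y : ℝ, 0 < x → x ≤ y → y ^ (-(1/s0)) ≤ x ^ (-(1/s0)) := by
    intro x y hx hxy
    rw [Real.rpow_neg hx.le, Real.rpow_neg (hx.trans_le hxy).le]
    exact inv_anti₀ (Real.rpow_pos_of_pos hx _)
      (Real.rpow_le_rpow hx.le hxy (by positivity))
  have hbanti : ∀ k, b (k + 1) ≤ b k := by
    intro k
    simp only [hbdef]
    rw [Nat.cast_add, Nat.cast_one]
    exact hmono ((k:ℝ) + 1) ((k:ℝ) + 1 + 1) (hbase k) (by linarith)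
  have hbrpow : ∀ (k : ℕ) (e : ℝ), b k ^ e = ((k:ℝ) + 1) ^ (-(e/s0)) := by
    intro k e
    simp only [hbdef]
    rw [← Real.rpow_mul (hbase k).le]
    congr 1
    ring
  -- divergence of the r-series
  have hnotsum : ¬ Summable (fun k : ℕ => ((k:ℝ) + 1) ^ (-(r'/s0))) := by
    intro hsum
    have hshift : Summable (fun n : ℕ => ((n:ℝ)) ^ (-(r'/s0))) := by
      rw [← summable_nat_add_iff 1]
      convert hsum using 2 with n
      · rfl
      push_cast
      ring_nf
    have := Real.summable_nat_rpow.mp hshift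
    have hlt : r'/s0 < 1 := (div_lt_one hs0pos).mpr hr's0
    have : (1:ℝ) < r'/s0 := by linarith
    linarith
  have hdiv : Tendsto (fun n => ∑ k ∈ Finset.range n, ((k:ℝ) + 1) ^ (-(r'/s0)))
      atTop atTop :=
    (not_summable_iff_tendsto_nat_atTop_of_nonneg
      (fun k => Real.rpow_nonneg (hbase k).le _)).mp hnotsum
  -- constants
  set lam : ℝ := (2:ℝ) ^ (-(1/p)) with hlamdef
  have hlam0 : 0 < lam := Real.rpow_pos_of_pos two_pos _
  have hlam1 : lam < 1 := Real.rpow_lt_one_of_one_lt_of_neg one_lt_two (neg_lt_zero.mpr (by positivity))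
  set c1 : ℝ := lam ^ (r' - 1) * (1 - lam) with hc1def
  have hc1pos : 0 < c1 := mul_pos (Real.rpow_pos_of_pos hlam0 _) (by linarith)
  -- uniform upper bound A
  obtain ⟨A, hAne, hAbd⟩ : ∃ A : ℝ≥0∞, A ≠ ⊤ ∧ ∀ N : ℕ,
      (q = ⊤ → (2:ℝ≥0∞) ^ (1/p) ≤ A) ∧
      (q ≠ ⊤ → ENNReal.ofReal p ^ (1/q.toReal) * ((2:ℝ≥0∞) ^ (q.toReal/p)
        * ENNReal.ofReal (∑ k ∈ Finset.range N, b k ^ q.toReal)) ^ (1/q.toReal) ≤ A) := by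
    by_cases hqt : q = ⊤
    · refine ⟨(2:ℝ≥0∞) ^ (1/p), ?_, fun N => ⟨fun _ => le_rfl, fun h => absurd hqt h⟩⟩
      exact (ENNReal.rpow_lt_top_of_nonneg (by positivity) (by norm_num)).ne
    · have hq'1 : 1 ≤ q.toReal := by
        have := ENNReal.toReal_mono hqt hq
        simpa using this
      have hq's0 : 1 < q.toReal / s0 := by
        rw [lt_div_iff₀ hs0pos]
        have := hs0q hqt
        linarith
      have hsumq : Summable (fun k : ℕ => b k ^ q.toReal) := by
        have h1 : Summable (fun n : ℕ => ((n:ℝ)) ^ (-(q.toReal/s0))) :=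
          Real.summable_nat_rpow.mpr (by linarith)
        have h2 := (summable_nat_add_iff 1).mpr h1
        refine h2.congr fun n => ?_
        rw [hbrpow n q.toReal]
        push_cast
        ring_nf
      refine ⟨ENNReal.ofReal p ^ (1/q.toReal) * ((2:ℝ≥0∞) ^ (q.toReal/p)
        * ENNReal.ofReal (∑' k, b k ^ q.toReal)) ^ (1/q.toReal), ?_, fun N =>
        ⟨fun h => absurd h hqt, fun _ => ?_⟩⟩
      · refine ENNReal.mul_ne_top ?_ ?_
        · exact (ENNReal.rpow_lt_top_of_nonneg (by positivity) ENNReal.ofReal_ne_top).ne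
        · refine (ENNReal.rpow_lt_top_of_nonneg (by positivity) ?_).ne
          exact ENNReal.mul_ne_top
            (ENNReal.rpow_lt_top_of_nonneg (by positivity) (by norm_num)).ne
            ENNReal.ofReal_ne_top
      · refine mul_le_mul_right (ENNReal.rpow_le_rpow (mul_le_mul_right ?_ _)
          (by positivity)) _
        refine ENNReal.ofReal_le_ofReal ?_
        exact Summable.sum_le_tsum _ (fun k _ => Real.rpow_nonneg (hb0 k).le _) hsumq
  have hCA : C * A ≠ ⊤ := ENNReal.mul_ne_top hC.ne hAne
  have hK : (C * A) ^ r' ≠ ⊤ :=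
    (ENNReal.rpow_lt_top_of_nonneg hr'pos.le hCA).ne
  have key : ∀ N : ℕ, c1 * ∑ k ∈ Finset.range N, ((k:ℝ) + 1) ^ (-(r'/s0))
      ≤ ((C * A) ^ r').toReal := by
    intro N
    obtain ⟨E, hmeas, hdisjE, hEempty, hEpos, hEfin, hEdoub, hEball⟩ :=
      exists_sets μ c s hdisj hpos hfin N
    obtain ⟨f, hfmeas, hf1, hf2, hf3⟩ := per_N μ hsupp p hp q r hq hr1 hrtop b hb0 hb1 hbanti
      N E hmeas hdisjE hEempty hEpos hEfin hEdoub hEball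
    have hupper : lNormE μ p q (fun x => ENNReal.ofReal |f x|) ≤ A := by
      by_cases hqt : q = ⊤
      · exact (hf1 hqt).trans ((hAbd N).1 hqt)
      · exact (hf2 hqt).trans ((hAbd N).2 hqt)
    have hlt : lNormE μ p q (fun x => ENNReal.ofReal |f x|) < ⊤ :=
      hupper.trans_lt (lt_top_iff_ne_top.mpr hAne)
    have hchain : ENNReal.ofReal (c1 * ∑ k ∈ Finset.range N, b k ^ r') ^ (1/r') ≤ C * A :=
      hf3.trans ((hbound f hfmeas hlt).trans (mul_le_mul_right hupper C))
    have h2 : ENNReal.ofReal (c1 * ∑ k ∈ Finset.range N, b k ^ r') ≤ (C * A) ^ r' := by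
      have h3 := ENNReal.rpow_le_rpow hchain hr'pos.le
      rwa [← ENNReal.rpow_mul, one_div_mul_cancel hr'pos.ne', ENNReal.rpow_one] at h3
    have h3 : c1 * ∑ k ∈ Finset.range N, b k ^ r' ≤ ((C * A) ^ r').toReal :=
      (ENNReal.ofReal_le_iff_le_toReal hK).mp h2
    have h4 : ∑ k ∈ Finset.range N, b k ^ r' = ∑ k ∈ Finset.range N, ((k:ℝ) + 1) ^ (-(r'/s0)) :=
      Finset.sum_congr rfl (fun k _ => hbrpow k r')
    rwa [h4] at h3
  obtain ⟨N, hN⟩ := (hdiv.eventually_gt_atTop (((C * A) ^ r').toReal / c1)).exists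
  have hkey := key N
  rw [div_lt_iff₀ hc1pos] at hN
  nlinarith [hkey, hN]
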